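/- Let T: V → A be a super O-operator of a Malcev superalgebra (A, [·,·]) associated to a representation (V, ρ). Then the product a·b = ρ(T(a))b makes V a pre-Malcev superalgebra. -/
import Mathlib


open scoped TensorProduct

/-- The super sign `(-1)^{ij}` for parities `i j : ZMod 2`. -/
def sgn (K : Type*) [Field K] (i j : ZMod 2) : K := (-1 : K) ^ (i * j).val

/-- `(A, br)` with grading `G` is a Malcev superalgebra: the bracket is even,
super skew-symmetric, and satisfies the super Malcev identity on homogeneous
elements. -/
def IsMalcev {K A : Type*} [Field K] [AddCommGroup A] [Module K A]
    (G : ZMod 2 → Submodule K A) (br : A →ₗ[K] A →ₗ[K] A) : Prop :=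
  (∀ i j, ∀ x ∈ G i, ∀ y ∈ G j, br x y ∈ G (i + j)) ∧
  (∀ i j, ∀ x ∈ G i, ∀ y ∈ G j, br x y = - sgn K i j • br y x) ∧
  (∀ i j k l, ∀ x ∈ G i, ∀ y ∈ G j, ∀ z ∈ G k, ∀ t ∈ G l,
    sgn K j k • br (br x z) (br y t) =
      br (br (br x y) z) t + sgn K i (j + k + l) • br (br (br y z) t) x
        + sgn K (i + j) (k + l) • br (br (br z t) x) y
        + sgn K l (i + j + k) • br (br (br t x) y) z)

/-- `ρ` is a representation of the Malcev superalgebra `(A, br)` on the graded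
space `(V, GV)`: `ρ` is even and satisfies the Malcev representation identity
on homogeneous elements. -/
def IsRep {K A V : Type*} [Field K] [AddCommGroup A] [Module K A]
    [AddCommGroup V] [Module K V]
    (G : ZMod 2 → Submodule K A) (br : A →ₗ[K] A →ₗ[K] A)
    (GV : ZMod 2 → Submodule K V) (ρ : A →ₗ[K] Module.End K V) : Prop :=
  (∀ i j, ∀ x ∈ G i, ∀ v ∈ GV j, ρ x v ∈ GV (i + j)) ∧
  (∀ i j k, ∀ x ∈ G i, ∀ y ∈ G j, ∀ z ∈ G k,
    ρ (br (br x y) z) =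
      ρ x * ρ y * ρ z - sgn K k (i + j) • (ρ z * ρ x * ρ y)
        + sgn K i (j + k) • (ρ y * ρ (br z x))
        - sgn K i (j + k) • (ρ (br y z) * ρ x))

/-- The pre-Malcev superidentity for a product `pm`, where `br` is (on
homogeneous elements) the supercommutator of `pm`. -/
def PreMalcevId {K A : Type*} [Field K] [AddCommGroup A] [Module K A]
    (G : ZMod 2 → Submodule K A) (pm br : A →ₗ[K] A →ₗ[K] A) : Prop :=
  ∀ i j k l, ∀ x ∈ G i, ∀ y ∈ G j, ∀ z ∈ G k, ∀ t ∈ G l,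
    sgn K i (j + k) • pm (br y z) (pm x t) + pm (br (br x y) z) t
      + sgn K i j • pm y (pm (br x z) t) - pm x (pm y (pm z t))
      + sgn K k (i + j) • pm z (pm x (pm y t)) = 0

/-- `br` is the supercommutator of the product `mul` on homogeneous elements:
`[x,y] = x·y - (-1)^{|x||y|} y·x`. -/
def SuperComm {K A : Type*} [Field K] [AddCommGroup A] [Module K A]
    (G : ZMod 2 → Submodule K A) (mul br : A →ₗ[K] A →ₗ[K] A) : Prop :=
  ∀ i j, ∀ x ∈ G i, ∀ y ∈ G j, br x y = mul x y - sgn K i j • mul y x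

lemma neg_one_pow_zmod_add (K : Type*) [Field K] (a b : ZMod 2) :
    ((-1 : K)) ^ ((a + b).val) = (-1 : K) ^ a.val * (-1 : K) ^ b.val := by
  have hval : ((a + b).val) % 2 = (a.val + b.val) % 2 := by revert a b; decide
  calc ((-1 : K)) ^ ((a + b).val) = (-1 : K) ^ (((a + b).val) % 2) := by
        conv_lhs => rw [← Nat.div_add_mod ((a + b).val) 2, pow_add, pow_mul, neg_one_sq, one_pow, one_mul]
    _ = (-1 : K) ^ ((a.val + b.val) % 2) := by rw [hval]
    _ = (-1 : K) ^ (a.val + b.val) := by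
        conv_rhs => rw [← Nat.div_add_mod (a.val + b.val) 2, pow_add, pow_mul, neg_one_sq, one_pow, one_mul]
    _ = _ := pow_add _ _ _

lemma sgn_add_right (K : Type*) [Field K] (i j k : ZMod 2) :
    sgn K i (j + k) = sgn K i j * sgn K i k := by
  unfold sgn
  rw [mul_add, neg_one_pow_zmod_add]

/-- a super O-operator `T` of a Malcev superalgebra associated to
a representation `(V, ρ)` induces a pre-Malcev superalgebra structure
`a · b = ρ(T a) b` on `V`. -/
theorem stmt9 {K A V : Type*} [Field K] [AddCommGroup A] [Module K A]
    [AddCommGroup V] [Module K V]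
    (G : ZMod 2 → Submodule K A) (br : A →ₗ[K] A →ₗ[K] A)
    (hA : IsMalcev G br)
    (GV : ZMod 2 → Submodule K V) (ρ : A →ₗ[K] Module.End K V)
    (hrep : IsRep G br GV ρ)
    (T : V →ₗ[K] A) (hTeven : ∀ i, ∀ v ∈ GV i, T v ∈ G i)
    (hT : ∀ i j, ∀ a ∈ GV i, ∀ b ∈ GV j,
      br (T a) (T b) = T (ρ (T a) b - sgn K i j • ρ (T b) a))
    (pmV brV : V →ₗ[K] V →ₗ[K] V)
    (hpmV : ∀ a b : V, pmV a b = ρ (T a) b)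
    (hbrV : SuperComm GV pmV brV) :
    PreMalcevId GV pmV brV := by
  intro i j k l x hx y hy z hz t ht
  have hTbr : ∀ i j, ∀ a ∈ GV i, ∀ b ∈ GV j, T (brV a b) = br (T a) (T b) := by
    intro i j a ha b hb
    rw [hbrV i j a ha b hb, hpmV, hpmV]
    exact (hT i j a ha b hb).symm
  have hbm : ∀ i j, ∀ a ∈ GV i, ∀ b ∈ GV j, brV a b ∈ GV (i + j) := by
    intro i j a ha b hb
    rw [hbrV i j a ha b hb, hpmV, hpmV]
    refine sub_mem (hrep.1 i j _ (hTeven i a ha) b hb) (Submodule.smul_mem _ _ ?_)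
    have := hrep.1 j i _ (hTeven j b hb) a ha
    rwa [add_comm] at this
  have e1 : pmV (brV y z) (pmV x t) = ρ (br (T y) (T z)) (ρ (T x) t) := by
    rw [hpmV, hpmV, hTbr j k y hy z hz]
  have e2 : pmV (brV (brV x y) z) t = ρ (br (br (T x) (T y)) (T z)) t := by
    rw [hpmV, hTbr (i + j) k _ (hbm i j x hx y hy) z hz, hTbr i j x hx y hy]
  have e3 : pmV y (pmV (brV x z) t) = ρ (T y) (ρ (br (T x) (T z)) t) := by
    rw [hpmV, hpmV, hTbr i k x hx z hz]
  have e4 : pmV x (pmV y (pmV z t)) = ρ (T x) (ρ (T y) (ρ (T z) t)) := by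
    rw [hpmV, hpmV, hpmV]
  have e5 : pmV z (pmV x (pmV y t)) = ρ (T z) (ρ (T x) (ρ (T y) t)) := by
    rw [hpmV, hpmV, hpmV]
  rw [e1, e2, e3, e4, e5]
  have hskew := hA.2.1 i k (T x) (hTeven i x hx) (T z) (hTeven k z hz)
  have H := LinearMap.congr_fun
    (hrep.2 i j k (T x) (hTeven i x hx) (T y) (hTeven j y hy) (T z) (hTeven k z hz)) t
  simp only [LinearMap.sub_apply, LinearMap.add_apply, LinearMap.smul_apply,
    Module.End.mul_apply] at H
  rw [H, hskew, map_smul, sgn_add_right K i j k]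
  simp only [LinearMap.neg_apply, LinearMap.smul_apply, neg_smul, map_neg, map_smul]
  module
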